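/- Let (E,R,∂) and (E',R',∂') be crossed modules of commutative algebras, f=(f₁,f₀) a crossed module morphism, and s: R → E' an f₀-derivation, i.e., a k-linear map with s(rr') = f₀(r)▶s(r') + f₀(r')▶s(r) + s(r)s(r'). Define g₀(r) = f₀(r) + ∂'(s(r)) and g₁(e) = f₁(e) + s(∂(e)). Then g=(g₁,g₀) is a crossed module morphism (E,R,∂) → (E',R',∂'): g₀ and g₁ are algebra maps, g₀∘∂ = ∂'∘g₁, and g₁(r▶e) = g₀(r)▶g₁(e). -/

import Mathlib

/-- An action of a commutative `k`-algebra `R` on a commutative `k`-algebra `M`: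
a `k`-bilinear map satisfying `r▶(mm') = (r▶m)m' = m(r▶m')` and `(rr')▶m = r▶(r'▶m)`. -/
structure AlgAction (k R M : Type*) [CommRing k] [CommRing R] [CommRing M]
    [Algebra k R] [Algebra k M] where
  act : R →ₗ[k] M →ₗ[k] M
  a1 : ∀ (r : R) (m m' : M), act r (m * m') = act r m * m'
  a1' : ∀ (r : R) (m m' : M), act r (m * m') = m * act r m'
  a2 : ∀ (r r' : R) (m : M), act (r * r') m = act r (act r' m)

/-- A pre-crossed module of commutative `k`-algebras. -/
structure PreCrossedModule (k E R : Type*) [CommRing k] [CommRing E] [CommRing R]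
    [Algebra k E] [Algebra k R] extends AlgAction k R E where
  map : E →ₗ[k] R
  map_mul : ∀ e e' : E, map (e * e') = map e * map e'
  xm1 : ∀ (r : R) (e : E), map (act r e) = r * map e

/-- A crossed module of commutative `k`-algebras. -/
structure CrossedModule (k E R : Type*) [CommRing k] [CommRing E] [CommRing R]
    [Algebra k E] [Algebra k R] extends PreCrossedModule k E R where
  xm2 : ∀ e e' : E, act (map e) e' = e * e'

/-- A morphism of crossed modules of commutative `k`-algebras. -/
structure XHom {k E R E' R' : Type*} [CommRing k] [CommRing E] [CommRing R]
    [CommRing E'] [CommRing R'] [Algebra k E] [Algebra k R] [Algebra k E'] [Algebra k R']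
    (C : CrossedModule k E R) (C' : CrossedModule k E' R') where
  f0 : R →ₗ[k] R'
  f1 : E →ₗ[k] E'
  f0_mul : ∀ r r', f0 (r * r') = f0 r * f0 r'
  f1_mul : ∀ e e', f1 (e * e') = f1 e * f1 e'
  comm : ∀ e, f0 (C.map e) = C'.map (f1 e)
  hact : ∀ r e, f1 (C.act r e) = C'.act (f0 r) (f1 e)

/-- `s : R → E'` is an `f₀`-derivation. -/
def IsDeriv {k E R E' R' : Type*} [CommRing k] [CommRing E] [CommRing R]
    [CommRing E'] [CommRing R'] [Algebra k E] [Algebra k R] [Algebra k E'] [Algebra k R']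
    {C : CrossedModule k E R} {C' : CrossedModule k E' R'}
    (f : XHom C C') (s : R →ₗ[k] E') : Prop :=
  ∀ r r', s (r * r') = C'.act (f.f0 r) (s r') + C'.act (f.f0 r') (s r) + s r * s r'

/-- `s` connects `f` to `g`: `g₀ = f₀ + ∂'∘s` and `g₁ = f₁ + s∘∂`. -/
def Connects {k E R E' R' : Type*} [CommRing k] [CommRing E] [CommRing R]
    [CommRing E'] [CommRing R'] [Algebra k E] [Algebra k R] [Algebra k E'] [Algebra k R']
    {C : CrossedModule k E R} {C' : CrossedModule k E' R'}
    (f g : XHom C C') (s : R →ₗ[k] E') : Prop :=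
  (∀ r, g.f0 r = f.f0 r + C'.map (s r)) ∧ (∀ e, g.f1 e = f.f1 e + s (C.map e))

/-! Expanding the derivation rule for `s`, each axiom for `g` reduces to XM1 and XM2 in the target;
the cross terms `f₀(∂e) ▶ x` become `f₁(e) x` because `f₀ ∂ = ∂' f₁` and XM2. -/

namespace XHom

variable {k E R E' R' : Type*} [CommRing k] [CommRing E] [CommRing R] [CommRing E'] [CommRing R']
  [Algebra k E] [Algebra k R] [Algebra k E'] [Algebra k R']
  {C : CrossedModule k E R} {C' : CrossedModule k E' R'}

theorem act_f0_map (f : XHom C C') (e : E) (m : E') :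
    C'.act (f.f0 (C.map e)) m = f.f1 e * m := by
  rw [f.comm, C'.xm2]

end XHom

namespace IsDeriv

variable {k E R E' R' : Type*} [CommRing k] [CommRing E] [CommRing R] [CommRing E'] [CommRing R']
  [Algebra k E] [Algebra k R] [Algebra k E'] [Algebra k R']
  {C : CrossedModule k E R} {C' : CrossedModule k E' R'} {f : XHom C C'} {s : R →ₗ[k] E'}

theorem f0_add_map_mul (hs : IsDeriv f s) (r r' : R) :
    f.f0 (r * r') + C'.map (s (r * r')) =
      (f.f0 r + C'.map (s r)) * (f.f0 r' + C'.map (s r')) := by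
  rw [f.f0_mul, hs r r', map_add, map_add, C'.map_mul, C'.xm1, C'.xm1]
  ring

theorem f1_add_mul (hs : IsDeriv f s) (e e' : E) :
    f.f1 (e * e') + s (C.map (e * e')) =
      (f.f1 e + s (C.map e)) * (f.f1 e' + s (C.map e')) := by
  rw [f.f1_mul, C.map_mul, hs, f.act_f0_map, f.act_f0_map]
  ring

theorem f1_add_act (hs : IsDeriv f s) (r : R) (e : E) :
    f.f1 (C.act r e) + s (C.map (C.act r e)) =
      C'.act (f.f0 r + C'.map (s r)) (f.f1 e + s (C.map e)) := by
  rw [f.hact, C.xm1, hs, f.act_f0_map, map_add, map_add, LinearMap.add_apply,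
    LinearMap.add_apply, C'.xm2, C'.xm2]
  ring

def perturb (hs : IsDeriv f s) : XHom C C' where
  f0 := f.f0 + C'.map ∘ₗ s
  f1 := f.f1 + s ∘ₗ C.map
  f0_mul := hs.f0_add_map_mul
  f1_mul := hs.f1_add_mul
  comm e := by simp only [LinearMap.add_apply, LinearMap.comp_apply, f.comm, map_add]
  hact := hs.f1_add_act

end IsDeriv

theorem stmt12 (k E R E2 R2 : Type*) [CommRing k] [CommRing E] [CommRing R] [CommRing E2] [CommRing R2]
    [Algebra k E] [Algebra k R] [Algebra k E2] [Algebra k R2]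
    (C : CrossedModule k E R) (C2 : CrossedModule k E2 R2)
    (f : XHom C C2) (s : R →ₗ[k] E2) (hs : IsDeriv f s) :
    ∃ g : XHom C C2, Connects f g s :=
  ⟨hs.perturb, fun _ => rfl, fun _ => rfl⟩
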